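/- arXiv:2301.11842 — 4 statements merged into one kernel-verified Lean document; each statement's English description precedes it below -/
import Mathlib

section
/- Let C be a category with terminal object and Γ = Hom(⊤, −) : C → Set the global sections functor. In the gluing category Gl(Γ), if C is cartesian closed, then for objects (C, Φ) and (D, Ψ) viewed as proof-relevant predicates on global points, the exponential exists and is given by (C^D, Ξ) where Ξ(f) = ∏_{d : Hom(⊤,D)} Ψ(d) → Φ(ε∘⟨f,d⟩), with ε the evaluation map. -/
open CategoryTheory CategoryTheory.Limits

universe v₁ v₂ u₁ u₂

/-- An object of the Artin gluing of `F : C ⥤ D`: a triple of an object of `C`, an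
object of `D`, and a morphism `fib ⟶ F.obj base`. -/
structure GlObj {C : Type u₁} {D : Type u₂} [Category.{v₁} C] [Category.{v₂} D]
    (F : C ⥤ D) where
  base : C
  fib : D
  hom : fib ⟶ F.obj base

/-- A morphism of the Artin gluing: a commuting square. -/
@[ext]
structure GlHom {C : Type u₁} {D : Type u₂} [Category.{v₁} C] [Category.{v₂} D]
    {F : C ⥤ D} (X Y : GlObj F) where
  base : X.base ⟶ Y.base
  fib : X.fib ⟶ Y.fib
  comm : fib ≫ Y.hom = X.hom ≫ F.map base

variable {C : Type u₁} {D : Type u₂} [Category.{v₁} C] [Category.{v₂} D]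

instance (F : C ⥤ D) : Category (GlObj F) where
  Hom X Y := GlHom X Y
  id X := ⟨𝟙 _, 𝟙 _, by simp⟩
  comp f g := ⟨f.base ≫ g.base, f.fib ≫ g.fib, by
    rw [Category.assoc, g.comm, ← Category.assoc, f.comm, Category.assoc, ← Functor.map_comp]⟩
  id_comp f := by apply GlHom.ext <;> simp
  comp_id f := by apply GlHom.ext <;> simp
  assoc f g h := by apply GlHom.ext <;> simp

/-- The first projection of the Artin gluing. -/
def glPi0 (F : C ⥤ D) : GlObj F ⥤ C where
  obj X := X.base
  map f := f.base
  map_id _ := rfl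
  map_comp _ _ := rfl

/-- The second projection of the Artin gluing. -/
def glPi1 (F : C ⥤ D) : GlObj F ⥤ D where
  obj X := X.fib
  map f := f.fib
  map_id _ := rfl
  map_comp _ _ := rfl


universe u

open MonoidalCategory

variable {C : Type u₁} [Category.{v₁} C] [CartesianMonoidalCategory C] [MonoidalClosed C]

/-- The global sections functor `Γ = Hom(⊤, -) : C ⥤ Type`. -/
noncomputable def pts (C : Type u₁) [Category.{v₁} C] [CartesianMonoidalCategory C] : C ⥤ Type v₁ :=
  coyoneda.obj (Opposite.op (𝟙_ C))

/-- The proof-relevant predicate on global points determined by an object of the gluing: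
`Φ(c)` is the fiber of the object's structure map over the global point `c`. -/
def ptsPred (A : GlObj (pts C)) (c : 𝟙_ C ⟶ A.base) : Type v₁ :=
  { x : A.fib // A.hom x = c }

/-- The candidate exponential `(C^D, Ξ)` of `A = (C, Φ)` by `B = (D, Ψ)` in the gluing,
where `Ξ(f) = ∏ (d : Hom(⊤,D)), Ψ(d) → Φ(ε ∘ ⟨f,d⟩)`. -/
noncomputable def expCand (A B : GlObj (pts C)) : GlObj (pts C) where
  base := (ihom B.base).obj A.base
  fib := Σ f : 𝟙_ C ⟶ (ihom B.base).obj A.base,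
    ∀ d : 𝟙_ C ⟶ B.base, ptsPred B d →
      ptsPred A (CartesianMonoidalCategory.lift d f ≫ (ihom.ev B.base).app A.base)
  hom := TypeCat.ofHom Sigma.fst

/-! Write `A = (C, Φ)`, `B = (D, Ψ)` and `Y = (Y₀, Θ)`. Finite products in the gluing are
computed componentwise, because `Γ` preserves them: the fibre of `B ⊗ Y` over `⟨d, g⟩` is
`Ψ d × Θ g`. Hence a morphism `B ⊗ Y ⟶ A` is a map `u : D ⊗ Y₀ ⟶ C` together with, for every
`y : Θ g`, a function `Ψ d → Φ (⟨d, g⟩ ≫ u)`. Since `⟨d, g ≫ curry u⟩ ≫ ε = ⟨d, g⟩ ≫ u`, this is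
exactly a morphism `Y ⟶ (C^D, Ξ)` lying over `curry u`, naturally in `Y`. So `(C^D, Ξ)` represents
`Hom(B ⊗ -, A)`, and the right adjoint of `B ⊗ -` can be chosen to be `(C^D, Ξ)` on objects. -/

open CartesianMonoidalCategory MonoidalClosed

lemma lift_comp_ev_app_eq_uncurry {T B Y A : C} (d : T ⟶ B) (g : T ⟶ Y)
    (v : Y ⟶ (ihom B).obj A) : lift d (g ≫ v) ≫ (ihom.ev B).app A = lift d g ≫ uncurry v := by
  rw [uncurry_eq, lift_whiskerLeft_assoc]

lemma lift_comp_curry_ev_app {T B Y A : C} (d : T ⟶ B) (g : T ⟶ Y) (u : B ⊗ Y ⟶ A) :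
    lift d (g ≫ curry u) ≫ (ihom.ev B).app A = lift d g ≫ u := by
  rw [lift_comp_ev_app_eq_uncurry, uncurry_curry]

namespace GlObj

section Gluing

variable {E : Type*} [Category E] {F : E ⥤ D}

@[ext]
lemma hom_ext {X Y : GlObj F} {f g : X ⟶ Y} (hbase : f.base = g.base) (hfib : f.fib = g.fib) :
    f = g :=
  GlHom.ext hbase hfib

@[simp]
lemma comp_base {X Y Z : GlObj F} (f : X ⟶ Y) (g : Y ⟶ Z) : (f ≫ g).base = f.base ≫ g.base := rfl

end Gluing

section Products

variable {C : Type u₁} [Category.{v₁} C] [CartesianMonoidalCategory C]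

lemma hom_comm_apply {X Y : GlObj (pts C)} (f : X ⟶ Y) (x : X.fib) :
    Y.hom (f.fib x) = X.hom x ≫ f.base :=
  ConcreteCategory.congr_hom f.comm x

noncomputable def terminal : GlObj (pts C) :=
  ⟨𝟙_ C, PUnit, TypeCat.ofHom fun _ => 𝟙 _⟩

noncomputable def isTerminalTerminal : IsTerminal (terminal (C := C)) :=
  IsTerminal.ofUniqueHom
    (fun X => ⟨toUnit _, TypeCat.ofHom fun _ => PUnit.unit, by ext; exact toUnit_unique _ _⟩)
    (fun X m => by ext; exacts [toUnit_unique _ _, rfl])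

noncomputable def prod (A B : GlObj (pts C)) : GlObj (pts C) where
  base := A.base ⊗ B.base
  fib := A.fib × B.fib
  hom := TypeCat.ofHom fun p => lift (A.hom p.1) (B.hom p.2)

noncomputable def prodFan (A B : GlObj (pts C)) : BinaryFan A B :=
  BinaryFan.mk (P := prod A B)
    ⟨fst _ _, TypeCat.ofHom Prod.fst, by ext; exact (lift_fst _ _).symm⟩
    ⟨snd _ _, TypeCat.ofHom Prod.snd, by ext; exact (lift_snd _ _).symm⟩

noncomputable def isLimitProdFan (A B : GlObj (pts C)) : IsLimit (prodFan A B) :=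
  BinaryFan.IsLimit.mk _
    (fun f g => ⟨lift f.base g.base, TypeCat.ofHom fun t => (f.fib t, g.fib t), by
      ext t
      exact (congrArg₂ lift (hom_comm_apply f t) (hom_comm_apply g t)).trans (comp_lift _ _ _).symm⟩)
    (fun f g => by ext; exacts [lift_fst _ _, rfl])
    (fun f g => by ext; exacts [lift_snd _ _, rfl])
    (fun f g m hfst hsnd => by
      subst hfst hsnd
      ext; exacts [(lift_comp_fst_snd m.base).symm, rfl])

noncomputable instance cartesianMonoidalCategory : CartesianMonoidalCategory (GlObj (pts C)) :=
  .ofChosenFiniteProducts ⟨asEmptyCone terminal, isTerminalTerminal⟩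
    fun A B => ⟨prodFan A B, isLimitProdFan A B⟩

lemma whiskerLeft_base (X : GlObj (pts C)) {Y Z : GlObj (pts C)} (f : Y ⟶ Z) :
    (X ◁ f).base = X.base ◁ f.base := by
  change lift (fst _ _ ≫ 𝟙 _) (snd _ _ ≫ f.base) = _
  ext <;> simp

end Products

lemma expCand_fib_ext {A B : GlObj (pts C)} {x y : (expCand A B).fib} (hpt : x.1 = y.1)
    (hsec : ∀ d b, (x.2 d b).val = (y.2 d b).val) : x = y := by
  obtain ⟨f, s⟩ := x
  obtain ⟨g, t⟩ := y
  subst hpt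
  congr
  funext d b
  exact Subtype.ext (hsec d b)

noncomputable def curryEquiv (B Y A : GlObj (pts C)) : (B ⊗ Y ⟶ A) ≃ (Y ⟶ expCand A B) where
  toFun u :=
    { base := curry u.base
      fib := TypeCat.ofHom fun y => ⟨Y.hom y ≫ curry u.base, fun d b => ⟨u.fib (b.1, y), by
        obtain ⟨b, rfl⟩ := b
        exact (hom_comm_apply u (b, y)).trans (lift_comp_curry_ev_app _ _ _).symm⟩⟩
      comm := rfl }
  invFun v :=
    { base := uncurry v.base
      fib := TypeCat.ofHom fun p => ((v.fib p.2).2 (B.hom p.1) ⟨p.1, rfl⟩).1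
      comm := by
        ext ⟨b, y⟩
        refine ((v.fib y).2 (B.hom b) ⟨b, rfl⟩).2.trans ?_
        refine (congrArg (fun g => lift (B.hom b) g ≫ _) (hom_comm_apply v y)).trans ?_
        exact lift_comp_ev_app_eq_uncurry _ _ _ }
  left_inv u := by
    ext
    · exact uncurry_curry u.base
    · rfl
  right_inv v := by
    ext y
    · exact curry_uncurry v.base
    · apply expCand_fib_ext
      · exact (congrArg (Y.hom y ≫ ·) (curry_uncurry v.base)).trans (hom_comm_apply v y).symm
      · rintro d ⟨b, rfl⟩
        rfl

lemma curryEquiv_naturality_left {B Y' Y A : GlObj (pts C)} (f : Y' ⟶ Y) (u : B ⊗ Y ⟶ A) :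
    curryEquiv B Y' A (B ◁ f ≫ u) = f ≫ curryEquiv B Y A u := by
  have hbase : curry (B ◁ f ≫ u).base = f.base ≫ curry u.base := by
    rw [comp_base, whiskerLeft_base]
    exact curry_natural_left _ _
  ext y
  · exact hbase
  · apply expCand_fib_ext
    · change Y'.hom y ≫ curry (B ◁ f ≫ u).base = Y.hom (f.fib y) ≫ curry u.base
      rw [hbase, hom_comm_apply]
      -- `rw` does not see `(pts C).obj Y'.base` as the hom-type `𝟙_ C ⟶ Y'.base`
      exact (Category.assoc _ _ _).symm
    · exact fun _ _ => rfl

noncomputable instance monoidalClosed : MonoidalClosed (GlObj (pts C)) where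
  closed B :=
    { rightAdj := Adjunction.rightAdjointOfEquiv (curryEquiv B)
        fun _ _ _ => curryEquiv_naturality_left
      adj := Adjunction.adjunctionOfEquivRight _ _ }

end GlObj

/-- If `C` is cartesian closed, the gluing category along the global sections functor is
cartesian closed, and the exponential of `(C, Φ)` by `(D, Ψ)` is given by `(C^D, Ξ)` with
`Ξ(f) = ∏ (d : Hom(⊤,D)), Ψ(d) → Φ(ε ∘ ⟨f,d⟩)`. -/
theorem gluing_exponential (A B : GlObj (pts C)) :
    ∃ (_ : CartesianMonoidalCategory (GlObj (pts C))) (_ : MonoidalClosed (GlObj (pts C))),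
      Nonempty ((ihom B).obj A ≅ expCand A B) :=
  ⟨inferInstance, inferInstance, ⟨Iso.refl _⟩⟩
end

section
/- Given a commuting square of functors ρ_n : E_n → F_n, ρ_m : E_m → F_m, f : E_n → E_m, g : F_n → F_m with ρ_m ∘ f = g ∘ ρ_n, where f and g are right adjoints with left adjoints f_! and g_!, the induced functor Gl(f,g) : Gl(ρ_n) → Gl(ρ_m) sending (E, F, x) to (f E, g F, g x) has a left adjoint. -/
open CategoryTheory CategoryTheory.Limits

universe v₁ v₂ u₁ u₂

variable {C : Type u₁} {D : Type u₂} [Category.{v₁} C] [Category.{v₂} D]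

@[simp] theorem GlHom.id_base {F : C ⥤ D} (X : GlObj F) :
    (𝟙 X : X ⟶ X).base = 𝟙 X.base := rfl

@[simp] theorem GlHom.id_fib {F : C ⥤ D} (X : GlObj F) :
    (𝟙 X : X ⟶ X).fib = 𝟙 X.fib := rfl

@[simp] theorem GlHom.comp_base {F : C ⥤ D} {X Y Z : GlObj F} (f : X ⟶ Y) (g : Y ⟶ Z) :
    (f ≫ g).base = f.base ≫ g.base := rfl

@[simp] theorem GlHom.comp_fib {F : C ⥤ D} {X Y Z : GlObj F} (f : X ⟶ Y) (g : Y ⟶ Z) :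
    (f ≫ g).fib = f.fib ≫ g.fib := rfl

universe v₃ v₄ u₃ u₄

variable {En : Type u₁} {Em : Type u₂} {Fn : Type u₃} {Fm : Type u₄}
  [Category.{v₁} En] [Category.{v₂} Em] [Category.{v₃} Fn] [Category.{v₄} Fm]

/-- The functor `Gl(f,g) : Gl(ρn) ⥤ Gl(ρm)` induced by a commuting square
`ρm ∘ f = g ∘ ρn`, sending `(E, F, x)` to `(f E, g F, g x)`. -/
def glMap (ρn : En ⥤ Fn) (ρm : Em ⥤ Fm) (f : En ⥤ Em) (g : Fn ⥤ Fm)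
    (h : f ⋙ ρm = ρn ⋙ g) : GlObj ρn ⥤ GlObj ρm where
  obj X := ⟨f.obj X.base, g.obj X.fib,
    g.map X.hom ≫ eqToHom (Functor.congr_obj h X.base).symm⟩
  map {X Y} u := ⟨f.map u.base, g.map u.fib, by
    have hc := Functor.congr_hom h u.base
    dsimp at hc ⊢
    rw [hc, ← Category.assoc, ← g.map_comp, u.comm, g.map_comp]
    simp⟩
  map_id X := by apply GlHom.ext <;> simp
  map_comp u v := by apply GlHom.ext <;> simp

section LeftAdjoint

variable (ρn : En ⥤ Fn) (ρm : Em ⥤ Fm) {f : En ⥤ Em} {g : Fn ⥤ Fm}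
  (fL : Em ⥤ En) (gL : Fm ⥤ Fn) (adj1 : fL ⊣ f) (adj2 : gL ⊣ g)
  (h : f ⋙ ρm = ρn ⋙ g)

/-- The left adjoint of `glMap`. -/
def glLeftAdj : GlObj ρm ⥤ GlObj ρn where
  obj X := ⟨fL.obj X.base, gL.obj X.fib,
    gL.map (X.hom ≫ ρm.map (adj1.unit.app X.base) ≫
      eqToHom (Functor.congr_obj h (fL.obj X.base))) ≫
      adj2.counit.app (ρn.obj (fL.obj X.base))⟩
  map {X Y} u := ⟨fL.map u.base, gL.map u.fib, by
    have hc := Functor.congr_hom h (fL.map u.base)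
    have hu := adj1.unit.naturality u.base
    dsimp at hc hu ⊢
    have key : u.fib ≫ Y.hom ≫ ρm.map (adj1.unit.app Y.base) ≫
        eqToHom (Functor.congr_obj h (fL.obj Y.base)) =
        (X.hom ≫ ρm.map (adj1.unit.app X.base) ≫
          eqToHom (Functor.congr_obj h (fL.obj X.base))) ≫
          g.map (ρn.map (fL.map u.base)) := by
      rw [← Category.assoc u.fib, u.comm, Category.assoc, ← ρm.map_comp_assoc, hu,
        ρm.map_comp]
      slice_lhs 3 3 => rw [hc]
      simp
    simp only [Category.assoc]
    rw [← adj2.counit_naturality (ρn.map (fL.map u.base))]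
    rw [← gL.map_comp_assoc, ← gL.map_comp_assoc, key]⟩
  map_id X := by apply GlHom.ext <;> simp
  map_comp u v := by apply GlHom.ext <;> simp

/-- The adjunction. -/
def glAdj : glLeftAdj ρn ρm fL gL adj1 adj2 h ⊣ glMap ρn ρm f g h :=
  Adjunction.mkOfHomEquiv
  { homEquiv := fun X Y =>
    { toFun := fun u => ⟨(adj1.homEquiv _ _) u.base, (adj2.homEquiv _ _) u.fib, by
        obtain ⟨ub, uf, hu⟩ := u
        change @Quiver.Hom Fn CategoryStruct.toQuiver (gL.obj X.fib) Y.fib at uf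
        change @Quiver.Hom En CategoryStruct.toQuiver (fL.obj X.base) Y.base at ub
        have hc := Functor.congr_hom h ub
        have hcomm := hu
        dsimp at hc
        dsimp [glLeftAdj] at hcomm
        dsimp [glMap]
        simp only [Adjunction.homEquiv_unit, Category.assoc]
        rw [← g.map_comp_assoc, hcomm]
        simp only [Functor.map_comp, Category.assoc, adj2.unit_naturality_assoc,
          adj2.right_triangle_components_assoc]
        simp [hc]⟩
      invFun := fun v => ⟨(adj1.homEquiv _ _).symm v.base, (adj2.homEquiv _ _).symm v.fib, by
        obtain ⟨vb, vf, hv0⟩ := v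
        change @Quiver.Hom Fm CategoryStruct.toQuiver X.fib (g.obj Y.fib) at vf
        change @Quiver.Hom Em CategoryStruct.toQuiver X.base (f.obj Y.base) at vb
        have hc := Functor.congr_hom h (fL.map vb ≫ adj1.counit.app Y.base)
        have hcomm := hv0
        dsimp [glMap] at hcomm
        dsimp [glLeftAdj]
        simp only [Adjunction.homEquiv_counit]
        dsimp at hc
        have hv : vf ≫ g.map Y.hom = X.hom ≫ ρm.map vb ≫
            eqToHom (Functor.congr_obj h Y.base) := by
          rw [← Category.assoc, ← hcomm]; simp
        have hc2 : eqToHom (Functor.congr_obj h (fL.obj X.base)) ≫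
            g.map (ρn.map (fL.map vb ≫ adj1.counit.app Y.base)) =
            ρm.map (f.map (fL.map vb ≫ adj1.counit.app Y.base)) ≫
              eqToHom (Functor.congr_obj h Y.base) := by
          rw [hc]; simp
        have hb : adj1.unit.app X.base ≫
            f.map (fL.map vb ≫ adj1.counit.app Y.base) = vb := by
          have hb0 := (adj1.homEquiv X.base Y.base).apply_symm_apply vb
          exact hb0
        have key : vf ≫ g.map Y.hom =
            (X.hom ≫ ρm.map (adj1.unit.app X.base) ≫
              eqToHom (Functor.congr_obj h (fL.obj X.base))) ≫
              g.map (ρn.map (fL.map vb ≫ adj1.counit.app Y.base)) := by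
          rw [hv]
          simp only [Category.assoc, hc2]
          rw [← ρm.map_comp_assoc, hb]
        simp only [Category.assoc]
        rw [← adj2.counit_naturality Y.hom]
        rw [← adj2.counit_naturality (ρn.map (fL.map vb ≫ adj1.counit.app Y.base))]
        rw [← gL.map_comp_assoc, ← gL.map_comp_assoc, key]
        rfl⟩
      left_inv := fun u => by apply GlHom.ext <;> exact Equiv.symm_apply_apply _ _
      right_inv := fun v => by apply GlHom.ext <;> exact Equiv.apply_symm_apply _ _ }
    homEquiv_naturality_left_symm := fun u v => by
      apply GlHom.ext
      · exact adj1.homEquiv_naturality_left_symm u.base v.base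
      · exact adj2.homEquiv_naturality_left_symm u.fib v.fib
    homEquiv_naturality_right := fun u v => by
      apply GlHom.ext
      · exact adj1.homEquiv_naturality_right u.base v.base
      · exact adj2.homEquiv_naturality_right u.fib v.fib }

end LeftAdjoint

/-- If `f` and `g` are right adjoints, the induced functor `Gl(f,g)` between the Artin
gluings has a left adjoint. -/
theorem glMap_isRightAdjoint (ρn : En ⥤ Fn) (ρm : Em ⥤ Fm) (f : En ⥤ Em) (g : Fn ⥤ Fm)
    (h : f ⋙ ρm = ρn ⋙ g) [f.IsRightAdjoint] [g.IsRightAdjoint] :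
    (glMap ρn ρm f g h).IsRightAdjoint :=
  ⟨glLeftAdj ρn ρm f.leftAdjoint g.leftAdjoint (Adjunction.ofIsRightAdjoint f)
    (Adjunction.ofIsRightAdjoint g) h,
    ⟨glAdj ρn ρm f.leftAdjoint g.leftAdjoint (Adjunction.ofIsRightAdjoint f)
      (Adjunction.ofIsRightAdjoint g) h⟩⟩
end

section
/- A Hofmann–Streicher universe in a presheaf topos PSh(C) satisfies realignment along any levelwise decidable proposition φ: for any small type B and any φ-partial small type A with a φ-partial isomorphism to B, there exists a small type A* isomorphic to B restricting strictly to A on φ. -/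
/-!
Since `φ` is subterminal, the projection `Γ ⨯ φ ⟶ Γ` is a monomorphism, so the induced functor
on categories of elements is injective on objects. The realigned family is `A` on the image of
that functor and `B` elsewhere, with the action of `B` on morphisms transported along pointwise
isomorphisms that on the image are the components of the given one; its restriction along the
injection is then `A` on the nose, by naturality of the given isomorphism.
-/

open CategoryTheory CategoryTheory.Limits

universe u

theorem CategoryTheory.IsSubterminal.mono_prod_fst {C : Type*} [Category C] {X P : C}
    (hP : IsSubterminal P) [HasBinaryProduct X P] : Mono (prod.fst : X ⨯ P ⟶ X) :=
  ⟨fun _ _ e => prod.hom_ext e (hP _ _)⟩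

theorem CategoryTheory.FunctorToTypes.isSubterminal_of_subsingleton {C : Type*} [Category C]
    {P : C ⥤ Type*} (hP : ∀ c, Subsingleton (P.obj c)) : IsSubterminal P :=
  fun _ _ _ => by ext c x; exact Subsingleton.elim _ _

theorem CategoryTheory.CategoryOfElements.map_obj_injective {C : Type*} [Category C]
    {F₁ F₂ : C ⥤ Type u} (α : F₁ ⟶ F₂) [Mono α] : Function.Injective (map α).obj := by
  rintro ⟨c, x⟩ ⟨c', y⟩ h
  obtain ⟨rfl, hxy⟩ := Sigma.mk.inj_iff.mp h
  have hα : Function.Injective (α.app c) :=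
    (mono_iff_injective _).mp ((NatTrans.mono_iff_mono_app α).mp ‹_› c)
  obtain rfl := hα (eq_of_heq hxy)
  rfl

namespace CategoryTheory.Functor

variable {D E T : Type*} [Category D] [Category E] [Category T] {F : D ⥤ E}
  (hF : Function.Injective F.obj) {A : D ⥤ T} {B : E ⥤ T} (iso : A ≅ F ⋙ B)

noncomputable def realignComponent (x : E) : B.obj x ≅ Function.extend F.obj A.obj B.obj x := by
  classical
  exact if h : ∃ a, F.obj a = x then
    eqToIso (congrArg B.obj h.choose_spec.symm) ≪≫ iso.symm.app h.choose ≪≫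
      eqToIso ((hF.extend_apply _ _ _).symm.trans (congrArg _ h.choose_spec))
  else eqToIso (Function.extend_apply' _ _ _ h).symm

theorem realignComponent_obj (a : D) :
    realignComponent hF iso (F.obj a) =
      iso.symm.app a ≪≫ eqToIso (hF.extend_apply A.obj B.obj a).symm := by
  have h : ∃ b, F.obj b = F.obj a := ⟨a, rfl⟩
  rw [realignComponent, dif_pos h]
  generalize_proofs p₁ p₂
  revert p₁ p₂
  rw [hF h.choose_spec]
  intro p₁ p₂
  ext
  simp

noncomputable def realign : E ⥤ T :=
  B.copyObj (Function.extend F.obj A.obj B.obj) (realignComponent hF iso)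

noncomputable def realignIso : realign hF iso ≅ B :=
  (B.isoCopyObj _ _).symm

theorem comp_realign : F ⋙ realign hF iso = A := by
  refine Functor.ext (fun a => hF.extend_apply A.obj B.obj a) fun a b f => ?_
  simp only [realign, copyObj, comp_map, realignComponent_obj, Iso.trans_inv, Iso.trans_hom,
    eqToIso.hom, eqToIso.inv, Iso.app_hom, Iso.app_inv, Iso.symm_hom, Iso.symm_inv, Category.assoc]
  rw [← comp_map, NatIso.naturality_2_assoc]

theorem whiskerLeft_realignIso_hom :
    whiskerLeft F (realignIso hF iso).hom = eqToHom (comp_realign hF iso) ≫ iso.hom := by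
  ext a
  show (realignComponent hF iso (F.obj a)).inv = _
  simp [realignComponent_obj, eqToHom_app]
  rfl

end CategoryTheory.Functor

theorem hofmann_streicher_realignment_general (C : Type u) [SmallCategory C]
    (φ Γ : Cᵒᵖ ⥤ Type u)
    (hsub : ∀ c : Cᵒᵖ, Subsingleton (φ.obj c))
    (B : Γ.Elements ⥤ Type u)
    (A : (Γ ⨯ φ).Elements ⥤ Type u)
    (iso : A ≅ CategoryOfElements.map (Limits.prod.fst : Γ ⨯ φ ⟶ Γ) ⋙ B) :
    ∃ (A' : Γ.Elements ⥤ Type u)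
      (h : CategoryOfElements.map (Limits.prod.fst : Γ ⨯ φ ⟶ Γ) ⋙ A' = A)
      (i : A' ≅ B),
      CategoryTheory.Functor.whiskerLeft
          (CategoryOfElements.map (Limits.prod.fst : Γ ⨯ φ ⟶ Γ)) i.hom
        = eqToHom h ≫ iso.hom := by
  have : Mono (prod.fst : Γ ⨯ φ ⟶ Γ) :=
    (FunctorToTypes.isSubterminal_of_subsingleton hsub).mono_prod_fst
  have hF := CategoryOfElements.map_obj_injective (prod.fst : Γ ⨯ φ ⟶ Γ)
  exact ⟨_, Functor.comp_realign hF iso, _, Functor.whiskerLeft_realignIso_hom hF iso⟩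

/-- Realignment for the Hofmann–Streicher universe of a presheaf topos, along a levelwise
decidable proposition `φ` (a levelwise decidable subterminal presheaf).

Small families over a presheaf `Γ` are presented à la Hofmann–Streicher as functors on the
category of elements of `Γ`; the restriction of a family to the context `Γ ∧ φ` (presented
as `Γ ⨯ φ`) is precomposition with the map on categories of elements induced by the
projection.  Given a family `B` over `Γ`, a family `A` over `Γ ⨯ φ` and an isomorphism
from `A` to the restriction of `B`, there is a family `A'` over `Γ` restricting *strictly*
to `A`, together with an isomorphism `A' ≅ B` restricting to the given one. -/
theorem hofmann_streicher_realignment (C : Type u) [SmallCategory C]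
    (φ Γ : Cᵒᵖ ⥤ Type u)
    (hsub : ∀ c : Cᵒᵖ, Subsingleton (φ.obj c))
    (hdec : ∀ c : Cᵒᵖ, Decidable (Nonempty (φ.obj c)))
    (B : Γ.Elements ⥤ Type u)
    (A : (Γ ⨯ φ).Elements ⥤ Type u)
    (iso : A ≅ CategoryOfElements.map (Limits.prod.fst : Γ ⨯ φ ⟶ Γ) ⋙ B) :
    ∃ (A' : Γ.Elements ⥤ Type u)
      (h : CategoryOfElements.map (Limits.prod.fst : Γ ⨯ φ ⟶ Γ) ⋙ A' = A)
      (i : A' ≅ B),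
      CategoryTheory.Functor.whiskerLeft
          (CategoryOfElements.map (Limits.prod.fst : Γ ⨯ φ ⟶ Γ)) i.hom
        = eqToHom h ≫ iso.hom :=
  hofmann_streicher_realignment_general C φ Γ hsub B A iso
end

section
/- In the glued normalization model, assume a type A* in the computability universe consists of a normal type code, a predicate Pred with reify : Pred → Nf and reflect : Ne → Pred both restricting to the identity on the syntactic part. Then the dependent function type over A* can be equipped with reify and reflect: reflect(e) = λa. reflect_{B}(app(e, reify_A a)) and reify(f) = lam(λv. reify_{B(reflect_A v)}(f(reflect_A v))), and these restrict to identities on the syntactic part. -/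
universe u

/-- Closure of computability structures under dependent products, in the abstract setting
of synthetic Tait computability.

`φ` is the syntactic proposition; under `z : φ` every object of normal/neutral/variable
forms is (strictly) equal to the corresponding object of syntactic terms, and all
structure maps restrict to identities (expressed via `HEq` along these equalities).

Given a computability structure `(PA, reflA, reifA)` on the domain `A`, a family of
computability structures `(PB, reflB, reifB)` on the codomain `B` (indexed by partial
syntactic elements `φ → TmA`), and neutral application `capp` / normal abstraction `clam`
restricting to syntactic application and λ-abstraction (via the syntactic isomorphism
`sα : TmPi ≃ Π a, TmB a`), the dependent function type can be equipped with
`reflect(e) = λ a, reflect_B (app (e, reify_A a))` and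
`reify(f) = lam (λ v, reify_B (f (reflect_A v)))`, and these restrict to the identity on
the syntactic part. -/
theorem pi_computability_structure (φ : Prop)
    -- syntactic types and the syntactic dependent product
    (TmA : Type u) (TmB : (φ → TmA) → Type u) (TmPi : Type u)
    (sα : ∀ z : φ, TmPi ≃ ((a : TmA) → TmB (fun _ => a)))
    -- normal, neutral and variable forms for the domain type `A`
    (NfA NeA VarA : Type u) (ιV : VarA → NeA)
    (dNfA : ∀ _ : φ, NfA = TmA) (dNeA : ∀ _ : φ, NeA = TmA)
    (dVarA : ∀ _ : φ, VarA = TmA)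
    (hιV : ∀ (z : φ) (v : VarA), cast (dNeA z) (ιV v) = cast (dVarA z) v)
    -- normal and neutral forms for the codomain family `B`
    (NfB NeB : (φ → TmA) → Type u)
    (dNfB : ∀ (t : φ → TmA) (_ : φ), NfB t = TmB t)
    (dNeB : ∀ (t : φ → TmA) (_ : φ), NeB t = TmB t)
    -- normal and neutral forms for the dependent product
    (NfPi NePi : Type u)
    (dNfPi : ∀ _ : φ, NfPi = TmPi) (dNePi : ∀ _ : φ, NePi = TmPi)
    -- neutral application and normal λ-abstraction, with their boundary conditions
    (capp : NePi → (u : NfA) → NeB (fun z => cast (dNfA z) u))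
    (hcapp : ∀ (z : φ) (e : NePi) (u : NfA),
      HEq (capp e u) (sα z (cast (dNePi z) e) (cast (dNfA z) u)))
    (clam : ((v : VarA) → NfB (fun z => cast (dNeA z) (ιV v))) → NfPi)
    (hclam : ∀ (z : φ) (b : (v : VarA) → NfB (fun z' => cast (dNeA z') (ιV v))),
      HEq (clam b) ((sα z).symm (fun a : TmA =>
        cast (show NfB (fun z' => cast (dNeA z') (ιV (cast (dVarA z).symm a)))
                = TmB (fun _ : φ => a) from
          (dNfB _ z).trans (congrArg TmB (funext fun z' => by
            rw [hιV z', Subsingleton.elim z' z, cast_cast, cast_eq])))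
          (b (cast (dVarA z).symm a)))))
    -- the computability structure on `A`
    (PA : Type u) (hPA : ∀ _ : φ, PA = TmA)
    (reflA : NeA → PA) (reifA : PA → NfA)
    (hreflA : ∀ (z : φ) (e : NeA), HEq (reflA e) e)
    (hreifA : ∀ (z : φ) (a : PA), HEq (reifA a) a)
    -- the computability structures on the family `B`
    (PB : (φ → TmA) → Type u) (hPB : ∀ (t : φ → TmA) (_ : φ), PB t = TmB t)
    (reflB : ∀ t, NeB t → PB t) (reifB : ∀ t, PB t → NfB t)
    (hreflB : ∀ (z : φ) (t : φ → TmA) (e : NeB t), HEq (reflB t e) e)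
    (hreifB : ∀ (z : φ) (t : φ → TmA) (p : PB t), HEq (reifB t p) p) :
    -- conclusion: the computability structure on the dependent product
    ∃ (reflect : NePi → (a : PA) → PB (fun z => cast (hPA z) a))
      (reify : ((a : PA) → PB (fun z => cast (hPA z) a)) → NfPi),
      -- `reflect` is given by the formula `λ a, reflect_B (app (e, reify_A a))`
      (∀ (e : NePi) (a : PA), HEq (reflect e a) (reflB _ (capp e (reifA a)))) ∧
      -- `reify` is given by the formula `lam (λ v, reify_B (f (reflect_A v)))`
      (∀ f : (a : PA) → PB (fun z => cast (hPA z) a),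
        ∃ b : (v : VarA) → NfB (fun z => cast (dNeA z) (ιV v)),
          reify f = clam b ∧ ∀ v : VarA, HEq (b v) (reifB _ (f (reflA (ιV v))))) ∧
      -- `reflect` restricts to the identity on the syntactic part
      (∀ (z : φ) (e : NePi) (a : PA),
        HEq (reflect e a) (sα z (cast (dNePi z) e) (cast (hPA z) a))) ∧
      -- `reify` restricts to the identity on the syntactic part
      (∀ (z : φ) (f : (a : PA) → PB (fun z => cast (hPA z) a)),
        HEq (reify f) ((sα z).symm (fun a : TmA =>
          cast (show PB (fun z' => cast (hPA z') (cast (hPA z).symm a))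
                  = TmB (fun _ : φ => a) from
            (hPB _ z).trans (congrArg TmB (funext fun z' => by
              rw [Subsingleton.elim z' z, cast_cast, cast_eq])))
          (f (cast (hPA z).symm a))))) := by

  refine ⟨fun e a => cast (congrArg PB (funext fun z =>
      eq_of_heq (((cast_heq _ _).trans (hreifA z a)).trans (cast_heq _ _).symm)))
      (reflB _ (capp e (reifA a))),
    fun f => clam (fun v => cast (congrArg NfB (funext fun z =>
      eq_of_heq (((cast_heq _ _).trans (hreflA z (ιV v))).trans (cast_heq _ _).symm)))
      (reifB _ (f (reflA (ιV v))))),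
    fun e a => cast_heq _ _,
    fun f => ⟨_, rfl, fun v => cast_heq _ _⟩,
    ?_, ?_⟩
  · intro z e a
    refine (cast_heq _ _).trans ((hreflB z _ _).trans ((hcapp z e (reifA a)).trans
      (congr_arg_heq (sα z (cast (dNePi z) e))
        (eq_of_heq (((cast_heq _ _).trans (hreifA z a)).trans (cast_heq _ _).symm)))))
  · intro z f
    refine (hclam z _).trans (heq_of_eq (congrArg (sα z).symm (funext fun a => ?_)))
    have hv : reflA (ιV (cast (dVarA z).symm a)) = cast (hPA z).symm a := by
      apply eq_of_heq
      refine (hreflA z _).trans ?_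
      refine ((cast_heq (dNeA z) _).symm.trans (heq_of_eq ?_)).trans (cast_heq _ _).symm
      rw [hιV z]; simp
    apply eq_of_heq
    refine (((cast_heq _ _).trans (cast_heq _ _)).trans
      ((hreifB z _ _).trans ?_)).trans (cast_heq _ _).symm
    rw [hv]
end
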